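/- arXiv:2404.18483 — 3 statements merged into one kernel-verified Lean document; each statement's English description precedes it below -/
import Mathlib

section
/- Let C be a triangulated category and D ⊆ C a thick triangulated subcategory such that: (1) D is connected, and (2) every nonzero thick subcategory T of C satisfies D ∩ T ≠ 0. Then C is connected. -/
/-!
STATEMENT 7: If `D ⊆ C` is a connected thick triangulated subcategory meeting every
nonzero thick subcategory of `C` nontrivially, then `C` is connected.
-/

open CategoryTheory Limits Pretriangulated Triangulated ZeroObject

universe v u

namespace CategoryTheory.Triangulated

/-- The Mathlib (Dec 2024) structure of a triangulated subcategory, removed since. -/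
structure Subcategory (C : Type*) [Category C] [HasZeroObject C] [HasShift C ℤ] [Preadditive C]
    [∀ n : ℤ, (shiftFunctor C n).Additive] [Pretriangulated C] where
  P : C → Prop
  zero' : ∃ (Z : C) (_ : IsZero Z), P Z
  shift (X : C) (n : ℤ) : P X → P (X⟦n⟧)
  ext₂' (T : Triangle C) (_ : T ∈ distTriang C) : P T.obj₁ → P T.obj₃ →
    ObjectProperty.isoClosure P T.obj₂

end CategoryTheory.Triangulated

section Defs

variable {E : Type u} [Category.{v} E] [HasZeroObject E] [HasShift E ℤ] [Preadditive E]
  [∀ n : ℤ, (shiftFunctor E n).Additive] [Pretriangulated E]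

/-- The iterated binary biproduct of a list of objects. -/
noncomputable def sumList : List E → E
  | [] => 0
  | X :: l => X ⊞ sumList l

/-- A triangulated subcategory is thick if it is closed under direct summands. -/
def IsThick (S : Triangulated.Subcategory E) : Prop :=
  ∀ (X Y Z : E), Nonempty (Z ≅ X ⊞ Y) → S.P Z → S.P X

/-- There are no nonzero morphisms from objects satisfying `P` to objects satisfying `Q`. -/
def HomOrth (P Q : E → Prop) : Prop :=
  ∀ ⦃X Y : E⦄ (f : X ⟶ Y), P X → Q Y → f = 0

/-- The class of objects `P` (e.g. the objects of a triangulated subcategory, or the whole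
category via `P = fun _ => True`) is connected: it contains a nonzero object, and for any two
triangulated subcategories `S₁, S₂` contained in `P`, with no morphisms between them in either
direction, such that every object satisfying `P` decomposes as a direct sum of an object of
`S₁` and an object of `S₂`, one of `S₁`, `S₂` consists of zero objects only. -/
def IsConnectedP (P : E → Prop) : Prop :=
  (∃ X : E, P X ∧ ¬ IsZero X) ∧
  ∀ S₁ S₂ : Triangulated.Subcategory E,
    (∀ X, S₁.P X → P X) → (∀ X, S₂.P X → P X) →
    HomOrth S₁.P S₂.P → HomOrth S₂.P S₁.P →
    (∀ X, P X → ∃ X₁ X₂, S₁.P X₁ ∧ S₂.P X₂ ∧ Nonempty (X ≅ X₁ ⊞ X₂)) →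
    (∀ X, S₁.P X → IsZero X) ∨ (∀ X, S₂.P X → IsZero X)

/-- The family of triangulated subcategories `S j` realizes the ambient category as the
direct sum `⊕_j S j`: each `S j` is closed under isomorphisms, there are no nonzero morphisms
between distinct summands, and every object is a finite direct sum of objects of the `S j`. -/
def IsDirectSumDecomp {ι : Type*} (S : ι → Triangulated.Subcategory E) : Prop :=
  (∀ i, ObjectProperty.IsClosedUnderIsomorphisms (S i).P) ∧
  (∀ i j, i ≠ j → HomOrth (S i).P (S j).P) ∧
  (∀ X : E, ∃ l : List E, (∀ Y ∈ l, ∃ i, (S i).P Y) ∧ Nonempty (X ≅ sumList l))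

/-- An object is indecomposable if it is nonzero and in any direct sum decomposition
one of the summands is zero. -/
def Indec (X : E) : Prop :=
  ¬ IsZero X ∧ ∀ (Y Z : E), Nonempty (X ≅ Y ⊞ Z) → IsZero Y ∨ IsZero Z

/-- A Krull–Remak–Schmidt triangulated category: every object is a finite direct sum of
objects with local endomorphism rings. -/
def IsKrullSchmidtCat : Prop :=
  ∀ X : E, ∃ l : List E, (∀ Y ∈ l, IsLocalRing (End Y)) ∧ Nonempty (X ≅ sumList l)

/-- `thickClosure X` is the class of objects of the smallest thick subcategory
containing `X`. -/
def thickClosure (X Y : E) : Prop :=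
  ∀ S : Triangulated.Subcategory E, IsThick S → S.P X → S.P Y

end Defs

/-!
Given a decomposition `C = S₁ ⊕ S₂`, the iso-closures of `S₁` and `S₂` are thick, since a summand
of an object of `S₁` has its `S₂`-component as a retract of an object of `S₁`, which forces that
component to vanish. Intersecting with `D` gives a decomposition of `D`, so by connectedness of `D`
one of `D ∩ Sᵢ` vanishes; as `D` meets every nonzero thick subcategory, `Sᵢ` itself vanishes.
-/

lemma HomOrth.isZero_of_retract {E : Type u} [Category.{v} E] [Preadditive E]
    {P Q : E → Prop} (h : HomOrth P Q) {X Y : E} (r : Retract X Y) (hX : P X) (hY : Q Y) :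
    IsZero X := by
  rw [IsZero.iff_id_eq_zero, ← r.retract, h r.i hX hY, zero_comp]

section

variable {E : Type u} [Category.{v} E] [HasZeroObject E] [HasShift E ℤ] [Preadditive E]
  [∀ n : ℤ, (shiftFunctor E n).Additive] [Pretriangulated E]

lemma IsThick.isClosedUnderIsomorphisms {S : Triangulated.Subcategory E} (hS : IsThick S) :
    ObjectProperty.IsClosedUnderIsomorphisms S.P where
  of_iso e hX := hS _ 0 _ ⟨e ≪≫ isoBiprodZero (isZero_zero E)⟩ hX

lemma IsThick.prop_of_iso_biprod_right {S : Triangulated.Subcategory E} (hS : IsThick S) {X Y Z : E}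
    (e : Z ≅ X ⊞ Y) (hZ : S.P Z) : S.P Y :=
  hS Y X Z ⟨e ≪≫ biprod.braiding X Y⟩ hZ

namespace CategoryTheory.Triangulated.Subcategory

instance isTriangulated (S : Subcategory E) : ObjectProperty.IsTriangulated S.P where
  exists_zero := let ⟨Z, hZ, hP⟩ := S.zero'; ⟨Z, hZ, hP⟩
  isStableUnderShiftBy n := ⟨fun X hX => S.shift X n hX⟩
  ext₂' := S.ext₂'

def ofIsTriangulated (P : ObjectProperty E) [P.IsTriangulated] : Subcategory E where
  P := P
  zero' := let ⟨Z, hZ, hP⟩ := P.exists_prop_of_containsZero; ⟨Z, hZ, hP⟩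
  shift X n hX := P.le_shift n X hX
  ext₂' := P.ext_of_isTriangulatedClosed₂'

def isoClosure (S : Subcategory E) : Subcategory E :=
  ofIsTriangulated (ObjectProperty.isoClosure S.P)

lemma le_isoClosure (S : Subcategory E) {X : E} (hX : S.P X) : S.isoClosure.P X :=
  ObjectProperty.le_isoClosure S.P X hX

def inf (S T : Subcategory E) (hT : IsThick T) : Subcategory E :=
  haveI := hT.isClosedUnderIsomorphisms
  ofIsTriangulated ((S.P : ObjectProperty E) ⊓ T.P)

end CategoryTheory.Triangulated.Subcategory

lemma isThick_isoClosure_of_decomp {S₁ S₂ : Triangulated.Subcategory E}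
    (h21 : HomOrth S₂.P S₁.P)
    (hdec : ∀ X : E, ∃ X₁ X₂, S₁.P X₁ ∧ S₂.P X₂ ∧ Nonempty (X ≅ X₁ ⊞ X₂)) :
    IsThick S₁.isoClosure := by
  rintro X Y Z ⟨e⟩ (⟨Z', hZ', ⟨eZ⟩⟩ : ObjectProperty.isoClosure S₁.P Z)
  obtain ⟨X₁, X₂, hX₁, hX₂, ⟨eX⟩⟩ := hdec X
  have r : Retract X₂ Z' := (BinaryBiproduct.bicone X₁ X₂).retract_right.trans <|
    (Retract.ofIso eX.symm).trans <| (BinaryBiproduct.bicone X Y).retract_left.trans <|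
      (Retract.ofIso e.symm).trans (Retract.ofIso eZ)
  exact ⟨X₁, hX₁, ⟨eX ≪≫ (isoBiprodZero (h21.isZero_of_retract r hX₂ hZ')).symm⟩⟩

lemma IsThick.exists_decomp_inf {D : Triangulated.Subcategory E} (hD : IsThick D)
    {S₁ S₂ : Triangulated.Subcategory E}
    (hdec : ∀ X : E, ∃ X₁ X₂, S₁.P X₁ ∧ S₂.P X₂ ∧ Nonempty (X ≅ X₁ ⊞ X₂)) (X : E) (hX : D.P X) :
    ∃ X₁ X₂, (S₁.inf D hD).P X₁ ∧ (S₂.inf D hD).P X₂ ∧ Nonempty (X ≅ X₁ ⊞ X₂) := by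
  obtain ⟨X₁, X₂, h₁, h₂, ⟨e⟩⟩ := hdec X
  exact ⟨X₁, X₂, ⟨h₁, hD X₁ X₂ X ⟨e⟩ hX⟩, ⟨h₂, hD.prop_of_iso_biprod_right e hX⟩, ⟨e⟩⟩

lemma isZero_of_forall_isZero_inf {D S : Triangulated.Subcategory E} (hD : IsThick D)
    (hmeet : (∃ X, S.isoClosure.P X ∧ ¬ IsZero X) → ∃ X, D.P X ∧ S.isoClosure.P X ∧ ¬ IsZero X)
    (h : ∀ X, (S.inf D hD).P X → IsZero X) (X : E) (hX : S.P X) : IsZero X := by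
  by_contra hX0
  obtain ⟨Y, hYD, ⟨Y', hY', ⟨e⟩⟩, hY0⟩ := hmeet ⟨X, S.le_isoClosure hX, hX0⟩
  exact hY0 ((h Y' ⟨hY', hD.isClosedUnderIsomorphisms.of_iso e hYD⟩).of_iso e)

end

theorem stmt7 {C : Type u} [Category.{v} C] [HasZeroObject C] [HasShift C ℤ] [Preadditive C]
    [∀ n : ℤ, (shiftFunctor C n).Additive] [Pretriangulated C]
    (D : Triangulated.Subcategory C) (hDthick : IsThick D) (hDconn : IsConnectedP D.P)
    (hmeet : ∀ T : Triangulated.Subcategory C, IsThick T →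
      (∃ X, T.P X ∧ ¬ IsZero X) → ∃ X, D.P X ∧ T.P X ∧ ¬ IsZero X) :
    IsConnectedP (fun _ : C => True) := by
  obtain ⟨⟨X, -, hX⟩, hDdecomp⟩ := hDconn
  refine ⟨⟨X, trivial, hX⟩, fun S₁ S₂ _ _ h12 h21 hdec => ?_⟩
  have hdec₁ : ∀ X : C, ∃ X₁ X₂, S₁.P X₁ ∧ S₂.P X₂ ∧ Nonempty (X ≅ X₁ ⊞ X₂) :=
    fun X => hdec X trivial
  have hdec₂ : ∀ X : C, ∃ X₂ X₁, S₂.P X₂ ∧ S₁.P X₁ ∧ Nonempty (X ≅ X₂ ⊞ X₁) := fun X =>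
    let ⟨X₁, X₂, h₁, h₂, ⟨e⟩⟩ := hdec₁ X
    ⟨X₂, X₁, h₂, h₁, ⟨e ≪≫ biprod.braiding _ _⟩⟩
  exact (hDdecomp (S₁.inf D hDthick) (S₂.inf D hDthick) (fun _ h => h.2) (fun _ h => h.2)
    (fun _ _ f h₁ h₂ => h12 f h₁.1 h₂.1) (fun _ _ f h₂ h₁ => h21 f h₂.1 h₁.1)
    (hDthick.exists_decomp_inf hdec₁)).imp
      (isZero_of_forall_isZero_inf hDthick (hmeet _ (isThick_isoClosure_of_decomp h21 hdec₁)))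
      (isZero_of_forall_isZero_inf hDthick (hmeet _ (isThick_isoClosure_of_decomp h12 hdec₂)))
end

section
/- Let (A, m) be a commutative Noetherian local ring. Then the homotopy category K^b(proj A) of bounded complexes of finitely generated projective A-modules is a connected triangulated category. -/
/-!
STATEMENT 11: For a commutative Noetherian local ring `(A, 𝔪)`, the homotopy category
`K^b(proj A)` of bounded complexes of finitely generated projective `A`-modules is
connected. It is formalized as the subcategory of the homotopy category of cochain
complexes of `A`-modules consisting of objects isomorphic to a bounded complex of
finitely generated projective modules.
-/

open CategoryTheory Limits Pretriangulated Triangulated ZeroObject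

universe v u

/-- Membership in `K^b(proj A)`: objects of the homotopy category isomorphic to a bounded
complex of finitely generated projective modules. -/
def KbProjP (A : Type u) [CommRing A]
    (X : HomotopyCategory (ModuleCat.{u} A) (ComplexShape.up ℤ)) : Prop :=
  ∃ Y : CochainComplex (ModuleCat.{u} A) ℤ,
    (∀ n : ℤ, Module.Finite A (Y.X n) ∧ Projective (Y.X n)) ∧
    (∃ a b : ℤ, ∀ n : ℤ, (n < a ∨ b < n) → IsZero (Y.X n)) ∧
    Nonempty (X ≅ (HomotopyCategory.quotient (ModuleCat.{u} A) (ComplexShape.up ℤ)).obj Y)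

/-!
The complex `A[0]` (the free module `A` in degree `0`) lies in `K^b(proj A)` and its
endomorphism ring there is `A`, which is local; hence `A[0]` is indecomposable, and in any
decomposition `K^b(proj A) = S₁ ⊕ S₂` it lies, with all its shifts, in one summand, say `S₁`.
An object of `S₂` then receives no nonzero map from any `A[n]`, so a bounded complex of
projectives representing it is acyclic. Being bounded above and degreewise projective, it is
K-projective, hence contractible, and the object is zero.
-/

theorem IsLocalRing.eq_zero_or_eq_one_of_isIdempotentElem {R : Type*} [Ring R] [IsLocalRing R]
    {e : R} (he : IsIdempotentElem e) : e = 0 ∨ e = 1 := by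
  rcases IsLocalRing.isUnit_or_isUnit_of_add_one (add_sub_cancel e 1) with hu | hu
  · exact .inr ((IsIdempotentElem.iff_eq_one_of_isUnit hu).mp he)
  · exact .inl (by simpa using (IsIdempotentElem.iff_eq_one_of_isUnit hu).mp he.one_sub)

section Triangulated

variable {E : Type u} [Category.{v} E] [HasZeroObject E] [HasShift E ℤ] [Preadditive E]
  [∀ n : ℤ, (shiftFunctor E n).Additive] [Pretriangulated E]

theorem indec_of_isLocalRing_end (X : E) [IsLocalRing (End X)] : Indec X := by
  refine ⟨fun hX => one_ne_zero (α := End X) (hX.eq_of_src _ _), fun Y Z ⟨φ⟩ => ?_⟩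
  let e : End X := φ.hom ≫ biprod.fst ≫ biprod.inl ≫ φ.inv
  have he : IsIdempotentElem e := by simp [IsIdempotentElem, e, End.mul_def]
  rcases IsLocalRing.eq_zero_or_eq_one_of_isIdempotentElem he with h | h
  · left
    rw [IsZero.iff_id_eq_zero]
    calc 𝟙 Y = biprod.inl ≫ φ.inv ≫ e ≫ φ.hom ≫ biprod.fst := by simp [e]
      _ = 0 := by simp [h]
  · right
    rw [IsZero.iff_id_eq_zero]
    calc 𝟙 Z = biprod.inr ≫ φ.inv ≫ e ≫ φ.hom ≫ biprod.snd := by simp [h, End.one_def]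
      _ = 0 := by simp [e]

theorem forall_isZero_of_homOrth {P : E → Prop} {X : E}
    (hgen : ∀ Y, P Y → (∀ (n : ℤ) (f : X⟦n⟧ ⟶ Y), f = 0) → IsZero Y)
    {S T : Subcategory E} (hST : HomOrth S.P T.P) (hT : ∀ Y, T.P Y → P Y)
    {X' : E} (hX' : S.P X') (e : X ≅ X') : ∀ Y, T.P Y → IsZero Y := by
  refine fun Y hY => hgen Y (hT Y hY) fun n f => ?_
  let e' := (shiftFunctor E n).mapIso e
  calc f = e'.hom ≫ e'.inv ≫ f := by simp
    _ = 0 := by rw [hST (e'.inv ≫ f) (S.shift X' n hX') hY, comp_zero]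

theorem isConnectedP_of_indec {P : E → Prop} {X : E} (hX : P X) (hind : Indec X)
    (hgen : ∀ Y, P Y → (∀ (n : ℤ) (f : X⟦n⟧ ⟶ Y), f = 0) → IsZero Y) : IsConnectedP P := by
  refine ⟨⟨X, hX, hind.1⟩, fun S₁ S₂ hS₁ hS₂ h₁₂ h₂₁ hdec => ?_⟩
  obtain ⟨X₁, X₂, h₁, h₂, ⟨φ⟩⟩ := hdec X hX
  rcases hind.2 X₁ X₂ ⟨φ⟩ with hz | hz
  · exact .inl (forall_isZero_of_homOrth hgen h₂₁ hS₁ h₂ (φ ≪≫ (isoZeroBiprod hz).symm))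
  · exact .inr (forall_isZero_of_homOrth hgen h₁₂ hS₂ h₁ (φ ≪≫ (isoBiprodZero hz).symm))

end Triangulated

namespace HomotopyCategory

variable (C : Type*) [Category C] [Preadditive C] [HasZeroObject C]

theorem eq_of_homotopy_single {X Y : C} {n : ℤ}
    {f g : (CochainComplex.singleFunctor C n).obj X ⟶ (CochainComplex.singleFunctor C n).obj Y}
    (h : Homotopy f g) : f = g := by
  apply HomologicalComplex.from_single_hom_ext
  have hcomm := h.comm n
  simp only [dNext_eq_dFrom_fromNext, CochainComplex.singleFunctor_obj_d, zero_comp,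
    prevD_eq_toPrev_dTo, comp_zero, add_zero, zero_add] at hcomm
  exact hcomm

instance (n : ℤ) : (singleFunctor C n).Full :=
  inferInstanceAs (CochainComplex.singleFunctor C n ⋙ quotient _ _).Full

instance (n : ℤ) : (singleFunctor C n).Faithful where
  map_injective hfg := (CochainComplex.singleFunctor C n).map_injective
    (eq_of_homotopy_single C (homotopyOfEq _ _ hfg))

end HomotopyCategory

theorem CochainComplex.exists_comp_d_eq_of_homotopy_mkHomFromSingle
    {C : Type*} [Category C] [Preadditive C] [HasZeroObject C]
    {K : CochainComplex C ℤ} {X : C} {p : ℤ} (f : X ⟶ K.X p)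
    (hf : ∀ q, (ComplexShape.up ℤ).Rel p q → f ≫ K.d p q = 0)
    (h : Homotopy (HomologicalComplex.mkHomFromSingle f hf) 0) :
    ∃ g : X ⟶ K.X (p - 1), g ≫ K.d (p - 1) p = f := by
  refine ⟨(HomologicalComplex.singleObjXSelf (.up ℤ) p X).inv ≫ h.hom p (p - 1), ?_⟩
  have hcomm := h.comm p
  rw [dNext_eq _ (show (ComplexShape.up ℤ).Rel p (p + 1) by simp),
    prevD_eq _ (show (ComplexShape.up ℤ).Rel (p - 1) p by simp)] at hcomm
  simp only [HomologicalComplex.mkHomFromSingle_f, HomologicalComplex.single_obj_d, zero_comp,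
    zero_add, HomologicalComplex.zero_f, add_zero] at hcomm
  rw [Category.assoc, ← hcomm, Iso.inv_hom_id_assoc]

theorem HomotopyCategory.isZero_quotient_obj_of_acyclic {C : Type*} [Category C] [Abelian C]
    (K : CochainComplex C ℤ) (d : ℤ) [K.IsStrictlyLE d] [∀ n, Projective (K.X n)]
    (hK : K.Acyclic) : IsZero ((quotient C (.up ℤ)).obj K) := by
  have := CochainComplex.isKProjective_of_projective K d
  rw [isZero_quotient_obj_iff]
  exact ⟨CochainComplex.IsKProjective.homotopyZero (𝟙 K) hK⟩

section ModuleCat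

variable {A : Type u} [CommRing A]

theorem acyclic_of_forall_hom_singleFunctor_obj_self_eq_zero
    (K : CochainComplex (ModuleCat.{u} A) ℤ)
    (hK : ∀ (p : ℤ) (f : (HomotopyCategory.singleFunctor (ModuleCat.{u} A) p).obj
      (ModuleCat.of A A) ⟶ (HomotopyCategory.quotient _ _).obj K), f = 0) :
    K.Acyclic := by
  intro p
  rw [HomologicalComplex.exactAt_iff' K (p - 1) p (p + 1) (by simp) (by simp),
    ShortComplex.moduleCat_exact_iff]
  intro (z : K.X p) (hz : K.d p (p + 1) z = 0)
  -- the cocycle `z` is a chain map `A[p] ⟶ K`, and a null-homotopy of it writes `z` as `d w`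
  let f : ModuleCat.of A A ⟶ K.X p := ModuleCat.ofHom (LinearMap.toSpanSingleton A (K.X p) z)
  have hf : ∀ q, (ComplexShape.up ℤ).Rel p q → f ≫ K.d p q = 0 := by
    rintro _ rfl
    ext
    simpa [f] using hz
  have h := HomotopyCategory.homotopyOfEq (HomologicalComplex.mkHomFromSingle f hf) 0
    ((hK p _).trans ((HomotopyCategory.quotient _ _).map_zero _ _).symm)
  obtain ⟨g, hg⟩ := CochainComplex.exists_comp_d_eq_of_homotopy_mkHomFromSingle f hf h
  have hgz : K.d (p - 1) p (g 1) = z := by simpa [f] using congr(ModuleCat.Hom.hom $hg 1)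
  exact ⟨g 1, hgz⟩

instance isLocalRing_end_singleFunctor_obj_self [IsLocalRing A] (n : ℤ) :
    IsLocalRing (End ((HomotopyCategory.singleFunctor (ModuleCat.{u} A) n).obj
      (ModuleCat.of A A))) := by
  let F := HomotopyCategory.singleFunctor (ModuleCat.{u} A) n
  have : Nontrivial (ModuleCat.of A A ⟶ ModuleCat.of A A) :=
    (ModuleCat.endRingEquiv (ModuleCat.of A A)).symm.injective.nontrivial
  have : Nontrivial (End (F.obj (ModuleCat.of A A))) :=
    (F.map_injective (X := ModuleCat.of A A) (Y := ModuleCat.of A A)).nontrivial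
  refine IsLocalRing.of_surjective' (algebraMap A _) fun e => ?_
  obtain ⟨u, rfl⟩ := F.map_surjective e
  refine ⟨u.hom 1, ?_⟩
  have hu : u = u.hom 1 • 𝟙 _ := by
    ext
    simp
  rw [Algebra.algebraMap_eq_smul_one]
  nth_rewrite 2 [hu]
  rw [Functor.map_smul, F.map_id]
  rfl

variable (A) in
theorem kbProjP_singleFunctor_obj_self (n : ℤ) :
    KbProjP A ((HomotopyCategory.singleFunctor (ModuleCat.{u} A) n).obj (ModuleCat.of A A)) := by
  refine ⟨(CochainComplex.singleFunctor _ n).obj (ModuleCat.of A A), fun i => ?_,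
    ⟨n, n, fun i hi => HomologicalComplex.isZero_single_obj_X _ _ _ _ (by omega)⟩, ⟨Iso.refl _⟩⟩
  by_cases hi : i = n
  · subst hi
    let e := HomologicalComplex.singleObjXSelf (ComplexShape.up ℤ) i (ModuleCat.of A A)
    exact ⟨Module.Finite.equiv e.symm.toLinearEquiv, Projective.of_iso e.symm
      (ModuleCat.projective_of_free (Module.Basis.singleton PUnit.{u + 1} A))⟩
  · have hz : IsZero (((CochainComplex.singleFunctor _ n).obj (ModuleCat.of A A)).X i) :=
      HomologicalComplex.isZero_single_obj_X _ _ _ _ hi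
    have := ModuleCat.subsingleton_of_isZero hz
    exact ⟨.of_finite, hz.projective⟩

theorem isZero_of_kbProjP_of_forall_hom_shift_eq_zero
    {Y : HomotopyCategory (ModuleCat.{u} A) (.up ℤ)} (hY : KbProjP A Y)
    (h : ∀ (n : ℤ) (f : ((HomotopyCategory.singleFunctor (ModuleCat.{u} A) 0).obj
      (ModuleCat.of A A))⟦n⟧ ⟶ Y), f = 0) : IsZero Y := by
  obtain ⟨K, hK, ⟨_, b, hb⟩, ⟨ε⟩⟩ := hY
  have : K.IsStrictlyLE b := (K.isStrictlyLE_iff b).2 fun i hi => hb i (.inr hi)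
  have : ∀ n, Projective (K.X n) := fun n => (hK n).2
  refine IsZero.of_iso (HomotopyCategory.isZero_quotient_obj_of_acyclic K b
    (acyclic_of_forall_hom_singleFunctor_obj_self_eq_zero K fun p f => ?_)) ε
  -- `e : A[0]⟦-p⟧ ≅ A[p]`
  let e := ((HomotopyCategory.singleFunctors (ModuleCat.{u} A)).shiftIso (-p) p 0
    (by omega)).app (ModuleCat.of A A)
  calc f = e.inv ≫ (e.hom ≫ f ≫ ε.inv) ≫ ε.hom := by simp
    _ = 0 := by rw [h (-p) (e.hom ≫ f ≫ ε.inv), zero_comp, comp_zero]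

end ModuleCat

theorem stmt11_general (A : Type u) [CommRing A] [IsLocalRing A] :
    IsConnectedP (KbProjP A) :=
  isConnectedP_of_indec (kbProjP_singleFunctor_obj_self A 0) (indec_of_isLocalRing_end _)
    fun _ => isZero_of_kbProjP_of_forall_hom_shift_eq_zero

theorem stmt11 (A : Type u) [CommRing A] [IsNoetherianRing A] [IsLocalRing A] :
    IsConnectedP (KbProjP A) :=
  stmt11_general A
end

section
/- Let C be a Krull–Remak–Schmidt triangulated category such that the collection of thick subcategories of C forms a set. Then C decomposes as a direct sum of connected triangulated subcategories. -/
/-!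
STATEMENT 14: A Krull–Remak–Schmidt triangulated category whose thick subcategories form
a set decomposes as a direct sum of connected triangulated subcategories.
-/

open CategoryTheory Limits Pretriangulated Triangulated ZeroObject

universe v u

/-!
Sort the indecomposable objects into classes under the equivalence relation generated by
"there is a nonzero morphism between them, in either direction" and "one is a shift of the
other"; for a class `α` let `componentP α` consist of the finite direct sums of indecomposables
of class `α`. Distinct classes are Hom-orthogonal, so by Krull–Schmidt these subcategories
decompose the category. Each is closed under extensions: if `X ⟶ Z ⟶ W ⟶ X⟦1⟧` is
distinguished with `X`, `W` of class `α`, and `Y` is an indecomposable summand of `Z` of another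
class, then `Y ⟶ Z ⟶ W` vanishes, so `Y ⟶ Z` factors through `X`, and `X ⟶ Z ⟶ Y` vanishes,
which forces `𝟙 Y = 0`. Each is connected: a splitting into two orthogonal triangulated pieces
puts every indecomposable of class `α` into exactly one piece, and linked indecomposables land
in the same piece.
-/

section Preadditive

variable {C : Type*} [Category C] [Preadditive C]

lemma Retract.isZero_of_isUnit {Z X : C} (r : Retract Z X) {a : End X} (ha : IsUnit a)
    (h : r.i ≫ a = 0) : IsZero Z := by
  obtain ⟨u, rfl⟩ := ha
  rw [IsZero.iff_id_eq_zero]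
  calc 𝟙 Z = (r.i ≫ u.val) ≫ u.inv ≫ r.r := by
        rw [Category.assoc, ← Category.assoc u.val, ← End.mul_def, u.inv_val, End.one_def,
          Category.id_comp, r.retract]
    _ = 0 := by rw [h, zero_comp]

lemma HomOrth.isoClosure {P Q : C → Prop} (h : HomOrth P Q) :
    HomOrth (ObjectProperty.isoClosure P) (ObjectProperty.isoClosure Q) := by
  rintro X Y f ⟨A, hA, ⟨e⟩⟩ ⟨B, hB, ⟨e'⟩⟩
  simpa using congrArg (e.hom ≫ · ≫ e'.inv) (h (e.inv ≫ f ≫ e'.hom) hA hB)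

end Preadditive

section KrullSchmidtDecomposition

open ObjectProperty

variable {E : Type u} [Category.{v} E] [HasZeroObject E] [HasShift E ℤ] [Preadditive E]
  [∀ n : ℤ, (shiftFunctor E n).Additive] [Pretriangulated E]

noncomputable def shiftBiprodIso (n : ℤ) (X Y : E) : (X ⊞ Y)⟦n⟧ ≅ X⟦n⟧ ⊞ Y⟦n⟧ :=
  have := preservesBinaryBiproducts_of_preservesBiproducts (shiftFunctor E n)
  (shiftFunctor E n).mapBiprod X Y

lemma isZero_of_retract_obj₂ {T : Triangle E} (hT : T ∈ distTriang E) {Y : E}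
    (r : Retract Y T.obj₂) (h₂ : r.i ≫ T.mor₂ = 0) (h₁ : T.mor₁ ≫ r.r = 0) : IsZero Y := by
  obtain ⟨g, hg⟩ := Triangle.coyoneda_exact₂ T hT r.i h₂
  rw [IsZero.iff_id_eq_zero, ← r.retract, hg, Category.assoc, h₁, comp_zero]

lemma indec_of_isLocalRing {X : E} (h : IsLocalRing (End X)) : Indec X := by
  refine ⟨fun hX => one_ne_zero (α := End X) (hX.eq_of_src _ _), fun Y Z ⟨e⟩ => ?_⟩
  let a : End X := e.hom ≫ biprod.fst ≫ biprod.inl ≫ e.inv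
  let b : End X := e.hom ≫ biprod.snd ≫ biprod.inr ≫ e.inv
  have hsum : a + b = 1 :=
    calc a + b = e.hom ≫ (biprod.fst ≫ biprod.inl + biprod.snd ≫ biprod.inr) ≫ e.inv := by
          simp only [a, b, Preadditive.add_comp, Preadditive.comp_add, Category.assoc]
      _ = (1 : End X) := by rw [biprod.total, Category.id_comp, e.hom_inv_id, End.one_def]
  rcases IsLocalRing.isUnit_or_isUnit_of_add_one hsum with ha | hb
  · exact Or.inr (Retract.isZero_of_isUnit ⟨biprod.inr ≫ e.inv, e.hom ≫ biprod.snd, by simp⟩ ha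
      (by simp [a]))
  · exact Or.inl (Retract.isZero_of_isUnit ⟨biprod.inl ≫ e.inv, e.hom ≫ biprod.fst, by simp⟩ hb
      (by simp [b]))

lemma Indec.shift {X : E} (hX : Indec X) (n : ℤ) : Indec (X⟦n⟧) := by
  refine ⟨fun h => hX.1 (((shiftFunctor E (-n)).map_isZero h).of_iso (shiftShiftNeg X n).symm),
    fun Y Z ⟨e⟩ => ?_⟩
  have e' : X ≅ Y⟦-n⟧ ⊞ Z⟦-n⟧ :=
    (shiftShiftNeg X n).symm ≪≫ (shiftFunctor E (-n)).mapIso e ≪≫ shiftBiprodIso (-n) Y Z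
  exact (hX.2 _ _ ⟨e'⟩).imp
    (fun h => ((shiftFunctor E n).map_isZero h).of_iso (shiftNegShift Y n).symm)
    (fun h => ((shiftFunctor E n).map_isZero h).of_iso (shiftNegShift Z n).symm)

lemma hom_to_sumList_eq_zero {X : E} :
    ∀ (l : List E), (∀ Y ∈ l, ∀ g : X ⟶ Y, g = 0) → ∀ f : X ⟶ sumList l, f = 0
  | [], _, f => (isZero_zero E).eq_of_tgt f 0
  | Y :: l, h, _ => biprod.hom_ext _ _
      ((h Y List.mem_cons_self _).trans zero_comp.symm)
      ((hom_to_sumList_eq_zero l (fun Y' hY' => h Y' (List.mem_cons_of_mem _ hY')) _).trans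
        zero_comp.symm)

lemma hom_from_sumList_eq_zero {Y : E} :
    ∀ (l : List E), (∀ X ∈ l, ∀ g : X ⟶ Y, g = 0) → ∀ f : sumList l ⟶ Y, f = 0
  | [], _, f => (isZero_zero E).eq_of_src f 0
  | X :: l, h, _ => biprod.hom_ext' _ _
      ((h X List.mem_cons_self _).trans comp_zero.symm)
      ((hom_from_sumList_eq_zero l (fun X' hX' => h X' (List.mem_cons_of_mem _ hX')) _).trans
        comp_zero.symm)

lemma exists_hom_ne_zero_of_iso_sumList {X : E} {l : List E} (hX : ¬ IsZero X)
    (e : X ≅ sumList l) : ∃ Y ∈ l, ∃ f : X ⟶ Y, f ≠ 0 := by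
  by_contra! h
  refine hX ((IsZero.iff_id_eq_zero X).2 ?_)
  rw [← e.hom_inv_id, hom_to_sumList_eq_zero l h e.hom, zero_comp]

lemma retract_sumList_of_mem : ∀ {l : List E} {Y : E}, Y ∈ l → Nonempty (Retract Y (sumList l))
  | X :: l, Y, h => by
    rcases List.mem_cons.1 h with rfl | h
    · exact ⟨⟨biprod.inl, biprod.fst, biprod.inl_fst⟩⟩
    · obtain ⟨r⟩ := retract_sumList_of_mem h
      exact ⟨r.trans ⟨biprod.inr, biprod.snd, biprod.inr_snd⟩⟩

lemma sumList_shift (n : ℤ) :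
    ∀ l : List E, Nonempty ((sumList l)⟦n⟧ ≅ sumList (l.map (·⟦n⟧)))
  | [] => ⟨(shiftFunctor E n).mapZeroObject⟩
  | X :: l => by
    obtain ⟨e⟩ := sumList_shift n l
    exact ⟨shiftBiprodIso n X (sumList l) ≪≫ biprod.mapIso (Iso.refl _) e⟩

def sumClosure (P : E → Prop) (X : E) : Prop :=
  ∃ l : List E, (∀ Y ∈ l, P Y) ∧ Nonempty (X ≅ sumList l)

lemma sumClosure_of_prop {P : E → Prop} {X : E} (hX : P X) : sumClosure P X :=
  ⟨[X], by simpa using hX, ⟨isoBiprodZero (isZero_zero E)⟩⟩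

lemma sumClosure_isClosedUnderIsomorphisms (P : E → Prop) :
    IsClosedUnderIsomorphisms (sumClosure P) where
  of_iso e := fun ⟨l, hl, ⟨e'⟩⟩ => ⟨l, hl, ⟨e.symm ≪≫ e'⟩⟩

lemma sumClosure_shift {P : E → Prop} (hP : ∀ X (n : ℤ), P X → P (X⟦n⟧)) {X : E} (n : ℤ)
    (hX : sumClosure P X) : sumClosure P (X⟦n⟧) := by
  obtain ⟨l, hl, ⟨e⟩⟩ := hX
  obtain ⟨e'⟩ := sumList_shift n l
  refine ⟨l.map (·⟦n⟧), ?_, ⟨(shiftFunctor E n).mapIso e ≪≫ e'⟩⟩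
  simpa using fun Y hY => hP Y n (hl Y hY)

lemma HomOrth.sumClosure {P Q : E → Prop} (h : HomOrth P Q) :
    HomOrth (sumClosure P) (sumClosure Q) := by
  rintro X Y f ⟨l, hl, ⟨e⟩⟩ ⟨m, hm, ⟨e'⟩⟩
  have : e.inv ≫ f ≫ e'.hom = 0 :=
    hom_from_sumList_eq_zero l (fun A hA _ =>
      hom_to_sumList_eq_zero m (fun B hB g => h g (hl A hA) (hm B hB)) _) _
  simpa using congrArg (e.hom ≫ · ≫ e'.inv) this

variable (E) in
abbrev IndecObj : Type u := {X : E // Indec X}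

def Linked (a b : IndecObj E) : Prop :=
  (∃ f : a.1 ⟶ b.1, f ≠ 0) ∨ (∃ f : b.1 ⟶ a.1, f ≠ 0) ∨ ∃ n : ℤ, Nonempty (b.1 ≅ a.1⟦n⟧)

lemma Linked.symm {a b : IndecObj E} : Linked a b → Linked b a
  | .inl h => .inr (.inl h)
  | .inr (.inl h) => .inl h
  | .inr (.inr ⟨n, ⟨e⟩⟩) => .inr (.inr ⟨-n, ⟨(shiftShiftNeg a.1 n).symm ≪≫
      (shiftFunctor E (-n)).mapIso e.symm⟩⟩)

variable (E) in
def Component : Type u := Quotient (Relation.EqvGen.setoid (Linked (E := E)))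

def component {X : E} (hX : Indec X) : Component E :=
  Quotient.mk _ ⟨X, hX⟩

lemma Linked.component_eq {a b : IndecObj E} (h : Linked a b) : component a.2 = component b.2 :=
  Quotient.sound (Relation.EqvGen.rel _ _ h)

lemma component_eq_of_hom_ne_zero {A B : E} (hA : Indec A) (hB : Indec B) (f : A ⟶ B)
    (hf : f ≠ 0) : component hA = component hB :=
  Linked.component_eq (a := ⟨A, hA⟩) (b := ⟨B, hB⟩) (.inl ⟨f, hf⟩)

lemma component_shift {A : E} (hA : Indec A) (n : ℤ) : component (hA.shift n) = component hA :=
  (Linked.component_eq (a := ⟨A, hA⟩) (b := ⟨_, hA.shift n⟩)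
    (.inr (.inr ⟨n, ⟨Iso.refl _⟩⟩))).symm

def componentP (α : Component E) : E → Prop :=
  sumClosure fun Y => ∃ hY : Indec Y, component hY = α

lemma componentP_component {X : E} (hX : Indec X) : componentP (component hX) X :=
  sumClosure_of_prop ⟨hX, rfl⟩

lemma componentP_homOrth {α β : Component E} (h : α ≠ β) :
    HomOrth (componentP α) (componentP β) :=
  HomOrth.sumClosure fun _ _ f ⟨hA, hα⟩ ⟨hB, hβ⟩ =>
    by_contra fun hf => h (hα ▸ hβ ▸ component_eq_of_hom_ne_zero hA hB f hf)

lemma exists_hom_ne_zero_of_componentP {α : Component E} {X : E} (hX : componentP α X)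
    (hX₀ : ¬ IsZero X) : ∃ (Y : E) (hY : Indec Y), component hY = α ∧ ∃ f : X ⟶ Y, f ≠ 0 := by
  obtain ⟨l, hl, ⟨e⟩⟩ := hX
  obtain ⟨Y, hY, f, hf⟩ := exists_hom_ne_zero_of_iso_sumList hX₀ e
  obtain ⟨hYi, hα⟩ := hl Y hY
  exact ⟨Y, hYi, hα, f, hf⟩

lemma component_eq_of_componentP {α : Component E} {X : E} (hX : Indec X)
    (h : componentP α X) : component hX = α := by
  obtain ⟨Y, hY, hα, f, hf⟩ := exists_hom_ne_zero_of_componentP h hX.1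
  exact (component_eq_of_hom_ne_zero hX hY f hf).trans hα

lemma componentP_shift (α : Component E) (X : E) (n : ℤ) (hX : componentP α X) :
    componentP α (X⟦n⟧) :=
  sumClosure_shift (fun _ n ⟨hY, hα⟩ => ⟨hY.shift n, (component_shift hY n).trans hα⟩) n hX

lemma componentP_ext₂ (hKRS : IsKrullSchmidtCat (E := E)) {α : Component E} {T : Triangle E}
    (hT : T ∈ distTriang E) (h₁ : componentP α T.obj₁) (h₃ : componentP α T.obj₃) :
    componentP α T.obj₂ := by
  obtain ⟨l, hloc, ⟨e⟩⟩ := hKRS T.obj₂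
  refine ⟨l, fun Y hY => ?_, ⟨e⟩⟩
  have hYi := indec_of_isLocalRing (hloc Y hY)
  refine ⟨hYi, by_contra fun hne => hYi.1 ?_⟩
  obtain ⟨r⟩ := retract_sumList_of_mem hY
  exact isZero_of_retract_obj₂ hT (r.trans e.symm.retract)
    (componentP_homOrth hne _ (componentP_component hYi) h₃)
    (componentP_homOrth (Ne.symm hne) _ h₁ (componentP_component hYi))

def componentSubcategory (hKRS : IsKrullSchmidtCat (E := E)) (α : Component E) :
    Triangulated.Subcategory E where
  P := componentP α
  zero' := ⟨0, isZero_zero E, [], by simp, ⟨Iso.refl _⟩⟩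
  shift := componentP_shift α
  ext₂' _ hT h₁ h₃ := le_isoClosure _ _ (componentP_ext₂ hKRS hT h₁ h₃)

section Connected

variable {α : Component E} (S : Triangulated.Subcategory E) {Q : E → Prop}
  (hS : ∀ X, S.P X → componentP α X) (hSQ : HomOrth S.P Q) (hQS : HomOrth Q S.P)
  (hcover : ∀ (Y : E) (hY : Indec Y), component hY = α →
    isoClosure S.P Y ∨ isoClosure Q Y)
include hS hSQ hQS hcover

lemma isoClosure_of_linked {a b : IndecObj E} (hab : Linked a b)
    (ha : isoClosure S.P a.1) : isoClosure S.P b.1 := by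
  obtain ⟨A, hA, ⟨eA⟩⟩ := ha
  have hb : component b.2 = α := by
    rw [← hab.component_eq]
    exact component_eq_of_componentP a.2
      ((sumClosure_isClosedUnderIsomorphisms _).of_iso eA.symm (hS A hA))
  rcases hab with ⟨f, hf⟩ | ⟨f, hf⟩ | ⟨n, ⟨e⟩⟩
  · exact (hcover _ b.2 hb).resolve_right fun hQ => hf (hSQ.isoClosure f ⟨A, hA, ⟨eA⟩⟩ hQ)
  · exact (hcover _ b.2 hb).resolve_right fun hQ => hf (hQS.isoClosure f hQ ⟨A, hA, ⟨eA⟩⟩)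
  · exact ⟨A⟦n⟧, S.shift A n hA, ⟨e ≪≫ (shiftFunctor E n).mapIso eA⟩⟩

lemma isoClosure_iff_of_component_eq {a b : IndecObj E} (h : component a.2 = component b.2) :
    isoClosure S.P a.1 ↔ isoClosure S.P b.1 :=
  Iff.of_eq <| Setoid.eqvGen_le (s := Setoid.ker fun c : IndecObj E => isoClosure S.P c.1)
    (fun _ _ hab => propext ⟨isoClosure_of_linked S hS hSQ hQS hcover hab,
      isoClosure_of_linked S hS hSQ hQS hcover hab.symm⟩) (Quotient.exact h)

end Connected

lemma componentP_isConnected (α : Component E) : IsConnectedP (componentP α) := by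
  refine ⟨?_, fun S₁ S₂ hS₁ hS₂ h₁₂ h₂₁ hdec => ?_⟩
  · obtain ⟨⟨X, hX⟩, rfl⟩ := Quotient.exists_rep α
    exact ⟨X, componentP_component hX, hX.1⟩
  have hcover (Y : E) (hY : Indec Y) (hα : component hY = α) :
      isoClosure S₁.P Y ∨ isoClosure S₂.P Y := by
    obtain ⟨X₁, X₂, h₁, h₂, ⟨e⟩⟩ := hdec Y (hα ▸ componentP_component hY)
    exact (hY.2 _ _ ⟨e⟩).symm.imp (fun h => ⟨X₁, h₁, ⟨e ≪≫ (isoBiprodZero h).symm⟩⟩)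
      (fun h => ⟨X₂, h₂, ⟨e ≪≫ (isoZeroBiprod h).symm⟩⟩)
  by_contra! ⟨⟨Z₁, hZ₁, hZ₁₀⟩, ⟨Z₂, hZ₂, hZ₂₀⟩⟩
  obtain ⟨W₁, hW₁, hα₁, f₁, hf₁⟩ := exists_hom_ne_zero_of_componentP (hS₁ Z₁ hZ₁) hZ₁₀
  obtain ⟨W₂, hW₂, hα₂, f₂, hf₂⟩ := exists_hom_ne_zero_of_componentP (hS₂ Z₂ hZ₂) hZ₂₀
  have hW₁S₁ : isoClosure S₁.P W₁ := (hcover W₁ hW₁ hα₁).resolve_right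
    fun h => hf₁ (h₁₂.isoClosure f₁ (le_isoClosure _ _ hZ₁) h)
  have hW₂S₁ : isoClosure S₁.P W₂ :=
    (isoClosure_iff_of_component_eq S₁ hS₁ h₁₂ h₂₁ hcover (a := ⟨W₁, hW₁⟩) (b := ⟨W₂, hW₂⟩)
      (hα₁.trans hα₂.symm)).1 hW₁S₁
  exact hf₂ (h₂₁.isoClosure f₂ (le_isoClosure _ _ hZ₂) hW₂S₁)

end KrullSchmidtDecomposition

theorem stmt14 {C : Type u} [Category.{v} C] [HasZeroObject C] [HasShift C ℤ] [Preadditive C]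
    [∀ n : ℤ, (shiftFunctor C n).Additive] [Pretriangulated C]
    (hKRS : IsKrullSchmidtCat (E := C))
    (hset : Small.{v} {S : Triangulated.Subcategory C // IsThick S}) :
    ∃ (ι : Type (max u v)) (S : ι → Triangulated.Subcategory C),
      (∀ i, IsConnectedP (S i).P) ∧ IsDirectSumDecomp S := by
  refine ⟨ULift.{v} (Component C), fun i => componentSubcategory hKRS i.down,
    fun i => componentP_isConnected i.down, fun _ => sumClosure_isClosedUnderIsomorphisms _,
    fun i j hij => componentP_homOrth fun h => hij (ULift.ext _ _ h), fun X => ?_⟩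
  obtain ⟨l, hloc, he⟩ := hKRS X
  exact ⟨l, fun Y hY => ⟨⟨component (indec_of_isLocalRing (hloc Y hY))⟩,
    componentP_component _⟩, he⟩
end
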